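/- arXiv:2010.14566 — 2 statements merged into one kernel-verified Lean document; each statement's English description precedes it below -/
import Mathlib

section
/- Fix an integer n ≥ 3. There do not exist real constants c_0, c_1, c_2, c_3 (allowed to depend on n) such that the identity φ_ijk = c_0 + c_1·φ_ij + c_2·φ_ik + c_3·φ_jk holds for every population size N ≥ 1, every neutral replacement rule satisfying the fixation axiom, every mutation probability u with 0 < u ≤ 1, and all sites i, j, k ∈ {1,…,N} (not necessarily distinct), where φ and the triple probabilities are computed under the unique neutral stationary distribution π°. -/
open Finset

namespace SCT

abbrev Event (N : ℕ) := Finset (Fin N) × (Fin N → Fin N)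

/-- The extension `α̃` of the parentage map of a replacement event:
it equals `α` on `R` and the identity off `R`. -/
def extMap {N : ℕ} (E : Event N) : Fin N → Fin N :=
  fun i => if i ∈ E.1 then E.2 i else i

/-- Transition probabilities of the mutation–selection Markov chain on states
`Fin N → Fin n`, for a replacement rule `p` and mutation probability `u`. -/
noncomputable def transMat (N n : ℕ) (p : Event N → ℝ) (u : ℝ)
    (x y : Fin N → Fin n) : ℝ :=
  ∑ E : Event N, p E *
    (∏ i ∈ E.1, ((1 - u) * (if y i = x (E.2 i) then (1:ℝ) else 0) + u / (n:ℝ))) *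
    (∏ i ∈ E.1ᶜ, (if y i = x i then (1:ℝ) else 0))

def IsDist {α : Type*} [Fintype α] (q : α → ℝ) : Prop :=
  (∀ a, 0 ≤ q a) ∧ ∑ a, q a = 1

def IsStationary {N n : ℕ} (P : (Fin N → Fin n) → (Fin N → Fin n) → ℝ)
    (π : (Fin N → Fin n) → ℝ) : Prop :=
  IsDist π ∧ ∀ y, ∑ x, π x * P x y = π y

/-- Fixation axiom: some site `i` can propagate its lineage through the whole
population via finitely many replacement events of positive probability. -/
def FixationAxiom {N : ℕ} (p : Event N → ℝ) : Prop :=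
  ∃ (i : Fin N) (m : ℕ) (E : Fin m → Event N), 1 ≤ m ∧
    (∀ k, 0 < p (E k)) ∧ (∃ k, i ∈ (E k).1) ∧
    ∀ j, ((List.ofFn (fun k => extMap (E k))).foldr (· ∘ ·) id) j = i

/-- Pairwise identity-by-state probability under the distribution `π`. -/
noncomputable def phi2 {N n : ℕ} (π : (Fin N → Fin n) → ℝ) (i j : Fin N) : ℝ :=
  ∑ x, π x * (if x i = x j then (1:ℝ) else 0)

/-- Triple identity-by-state probability under the distribution `π`. -/
noncomputable def phi3 {N n : ℕ} (π : (Fin N → Fin n) → ℝ) (i j k : Fin N) : ℝ :=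
  ∑ x, π x * (if x i = x j ∧ x j = x k then (1:ℝ) else 0)

/-! If every site is replaced in every step and `u = 1`, each step draws a fresh uniformly random
state, so the uniform distribution is the unique stationary distribution. Under it `φ_ij = 1/n`
and `φ_ijk = 1/n²` for distinct sites, while coinciding sites reduce `φ_ijk` to some `φ_ij`, and
`φ_ii = 1`. For the index patterns `iii, iij, iji, ijj, ijk` the affine identity becomes a linear
system in the constants whose solvability forces `(2/n - 1)(1/n - 1) = 0`, i.e. `n ∈ {1, 2}`. -/

section Stationary

variable {N n : ℕ} {P : (Fin N → Fin n) → (Fin N → Fin n) → ℝ} {q : (Fin N → Fin n) → ℝ}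

theorem isStationary_of_rows_eq (hq : IsDist q) (hP : ∀ x y, P x y = q y) :
    IsStationary P q :=
  ⟨hq, fun y => by simp only [hP, ← Finset.sum_mul, hq.2, one_mul]⟩

theorem IsStationary.eq_of_rows_eq {π : (Fin N → Fin n) → ℝ} (hπ : IsStationary P π)
    (hP : ∀ x y, P x y = q y) : π = q :=
  funext fun y => by rw [← hπ.2 y]; simp only [hP, ← Finset.sum_mul, hπ.1.2, one_mul]

end Stationary

noncomputable def unif (N n : ℕ) : (Fin N → Fin n) → ℝ := fun _ => ((n : ℝ) ^ N)⁻¹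

theorem isDist_unif (N : ℕ) {n : ℕ} (hn : 0 < n) : IsDist (unif N n) := by
  refine ⟨fun _ => by unfold unif; positivity, ?_⟩
  have : (n : ℝ) ≠ 0 := by exact_mod_cast hn.ne'
  simp [unif, Finset.card_univ, this]

section ResampleAll

variable (N : ℕ) [NeZero N]

def resampleAll : Event N := (Finset.univ, fun _ => 0)

def resampleAllRule : Event N → ℝ := fun E => if E = resampleAll N then 1 else 0

theorem isDist_resampleAllRule : IsDist (resampleAllRule N) :=
  ⟨fun E => by unfold resampleAllRule; split_ifs <;> norm_num, by simp [resampleAllRule]⟩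

theorem fixationAxiom_resampleAllRule : FixationAxiom (resampleAllRule N) :=
  ⟨0, 1, fun _ => resampleAll N, le_rfl, fun _ => by simp [resampleAllRule],
    ⟨0, Finset.mem_univ _⟩, fun j => by simp [List.ofFn_succ, extMap, resampleAll]⟩

theorem transMat_resampleAllRule_one (n : ℕ) (x y : Fin N → Fin n) :
    transMat N n (resampleAllRule N) 1 x y = unif N n y := by
  rw [transMat, Finset.sum_eq_single (resampleAll N) (fun E _ hE => by simp [resampleAllRule, hE])
    (by simp)]
  simp [resampleAllRule, resampleAll, unif, Finset.prod_const]

theorem isStationary_unif {n : ℕ} (hn : 0 < n) :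
    IsStationary (transMat N n (resampleAllRule N) 1) (unif N n) :=
  isStationary_of_rows_eq (isDist_unif N hn) (transMat_resampleAllRule_one N n)

end ResampleAll

section IdentityByState

variable {N n : ℕ} (π : (Fin N → Fin n) → ℝ)

theorem phi2_self (hπ : IsDist π) (i : Fin N) : phi2 π i i = 1 := by
  simp [phi2, hπ.2]

theorem phi3_self_left (i k : Fin N) : phi3 π i i k = phi2 π i k := by
  simp [phi3, phi2]

theorem phi3_self_right (i j : Fin N) : phi3 π i j j = phi2 π i j := by
  simp [phi3, phi2]

theorem phi3_self_outer (i j : Fin N) : phi3 π i j i = phi2 π i j := by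
  unfold phi3 phi2
  refine Finset.sum_congr rfl fun x _ => ?_
  by_cases h : x i = x j <;> simp [h, eq_comm]

end IdentityByState

section Counting

variable {ι α : Type*} [Fintype ι] [DecidableEq ι] [Fintype α] [DecidableEq α]

theorem card_filter_apply_eq_apply {i j : ι} (hij : i ≠ j) :
    #{x : ι → α | x i = x j} = Fintype.card ({k // k ≠ j} → α) := by
  rw [Finset.card_filter, ← (Equiv.funSplitAt j α).symm.sum_comp, Fintype.sum_prod_type,
    Finset.sum_comm]
  simp [Equiv.funSplitAt_symm_apply, hij]

theorem card_filter_apply_eq_apply_mul {i j : ι} (hij : i ≠ j) :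
    #{x : ι → α | x i = x j} * Fintype.card α = Fintype.card (ι → α) := by
  rw [card_filter_apply_eq_apply hij, mul_comm, ← Fintype.card_prod,
    Fintype.card_congr (Equiv.funSplitAt j α)]

theorem card_filter_apply_eq_apply_and_mul {i j k : ι} (hij : i ≠ j) (hik : i ≠ k) (hjk : j ≠ k) :
    #{x : ι → α | x i = x j ∧ x j = x k} * Fintype.card α ^ 2 = Fintype.card (ι → α) := by
  have hsplit : #{x : ι → α | x i = x j ∧ x j = x k} =
      #{y : {l // l ≠ k} → α | y ⟨i, hik⟩ = y ⟨j, hjk⟩} := by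
    rw [Finset.card_filter, Finset.card_filter, ← (Equiv.funSplitAt k α).symm.sum_comp,
      Fintype.sum_prod_type, Finset.sum_comm]
    simp [Equiv.funSplitAt_symm_apply, hik, hjk, ite_and]
  rw [hsplit, sq, ← mul_assoc, card_filter_apply_eq_apply_mul (by simpa using hij), mul_comm,
    ← Fintype.card_prod, Fintype.card_congr (Equiv.funSplitAt k α)]

end Counting

section UniformIdentityByState

variable {N n : ℕ}

theorem sum_unif_mul_ite {p : (Fin N → Fin n) → Prop} [DecidablePred p] (hn : 0 < n) {m : ℕ}
    (hp : #{x | p x} * n ^ m = n ^ N) :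
    ∑ x, unif N n x * (if p x then 1 else 0) = (n : ℝ)⁻¹ ^ m := by
  have hn' : (n : ℝ) ≠ 0 := by exact_mod_cast hn.ne'
  simp only [unif, ← Finset.mul_sum, Finset.sum_boole]
  rw [inv_mul_eq_iff_eq_mul₀ (by positivity), ← Nat.cast_pow, ← hp, Nat.cast_mul, Nat.cast_pow,
    mul_assoc, ← mul_pow, mul_inv_cancel₀ hn', one_pow, mul_one]

theorem phi2_unif (hn : 0 < n) {i j : Fin N} (hij : i ≠ j) : phi2 (unif N n) i j = (n : ℝ)⁻¹ :=
  pow_one (n : ℝ)⁻¹ ▸ sum_unif_mul_ite hn (m := 1)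
    (by simpa using card_filter_apply_eq_apply_mul (α := Fin n) hij)

theorem phi3_unif (hn : 0 < n) {i j k : Fin N} (hij : i ≠ j) (hik : i ≠ k) (hjk : j ≠ k) :
    phi3 (unif N n) i j k = (n : ℝ)⁻¹ ^ 2 :=
  sum_unif_mul_ite hn (by simpa using card_filter_apply_eq_apply_and_mul (α := Fin n) hij hik hjk)

end UniformIdentityByState

/-- For `n ≥ 3` strategies there is no universal affine expression of the
triple identity-by-state probability in terms of the pairwise ones. -/
theorem stmt3 (n : ℕ) (hn : 3 ≤ n) :
    ¬ ∃ c0 c1 c2 c3 : ℝ,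
        ∀ (N : ℕ), 1 ≤ N →
        ∀ p : Event N → ℝ, IsDist p → FixationAxiom p →
        ∀ u : ℝ, 0 < u → u ≤ 1 →
        ∀ π : (Fin N → Fin n) → ℝ,
          IsStationary (transMat N n p u) π →
          (∀ π', IsStationary (transMat N n p u) π' → π' = π) →
        ∀ i j k : Fin N,
          phi3 π i j k =
            c0 + c1 * phi2 π i j + c2 * phi2 π i k + c3 * phi2 π j k := by
  rintro ⟨c0, c1, c2, c3, h⟩
  have hn0 : 0 < n := by omega
  have h3 := h 3 (by norm_num) (resampleAllRule 3) (isDist_resampleAllRule 3)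
    (fixationAxiom_resampleAllRule 3) 1 one_pos le_rfl (unif 3 n) (isStationary_unif 3 hn0)
    fun _ hπ => hπ.eq_of_rows_eq (transMat_resampleAllRule_one 3 n)
  have e000 := h3 0 0 0
  have e001 := h3 0 0 1
  have e010 := h3 0 1 0
  have e011 := h3 0 1 1
  have e012 := h3 0 1 2
  simp (disch := decide) only [phi3_self_left, phi3_self_outer, phi3_self_right,
    phi2_self _ (isDist_unif 3 hn0), phi2_unif hn0, phi3_unif hn0] at e000 e001 e010 e011 e012
  have hquad : (2 * (n : ℝ)⁻¹ - 1) * ((n : ℝ)⁻¹ - 1) = 0 := by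
    linear_combination 2 * e012 + e000 - e001 - e010 - e011
  have hinv : (n : ℝ)⁻¹ ≤ 3⁻¹ := inv_anti₀ (by norm_num) (by exact_mod_cast hn)
  exact (mul_pos_of_neg_of_neg (by linarith) (by linarith)).ne' hquad

end SCT
end

section
/- The structure coefficients are independent of the number of strategies: fix N, a neutral replacement rule p° satisfying the fixation axiom, u ∈ (0,1], an interaction matrix (ω_{kℓ}), and a replacement-rule family (hence m_k^{ji} and v*_i, which do not depend on n). For each integer n ≥ 3, let φ_ij(n) and φ_ijk(n) be the pairwise and triple identity-by-state probabilities of the neutral chain with n strategies, and let λ̃₁(n), λ̃₂(n), λ̃₃(n) be given by λ̃₁(n) = Σ_{i,j,k} v*_i·m_k^{ji}·Σ_ℓ ω_{kℓ}·[−n²φ_{ikℓ}(n) + n²(1−u)φ_{jkℓ}(n) + nφ_{ik}(n) + nφ_{iℓ}(n) − n(1−u)φ_{jk}(n) − n(1−u)φ_{jℓ}(n) + nuφ_{kℓ}(n) − 2u]/((n−1)(n−2)), λ̃₂(n) = Σ_{i,j,k} v*_i·m_k^{ji}·Σ_ℓ ω_{kℓ}·[−n²φ_{ikℓ}(n) +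 n²(1−u)φ_{jkℓ}(n) + nφ_{ik}(n) + n(n−1)φ_{iℓ}(n) − n(1−u)φ_{jk}(n) − n(n−1)(1−u)φ_{jℓ}(n) + nuφ_{kℓ}(n) − nu]/((n−1)(n−2)), λ̃₃(n) = Σ_{i,j,k} v*_i·m_k^{ji}·Σ_ℓ ω_{kℓ}·[2n²φ_{ikℓ}(n) − 2n²(1−u)φ_{jkℓ}(n) − n²φ_{ik}(n) − n²φ_{iℓ}(n) + n²(1−u)φ_{jk}(n) + n²(1−u)φ_{jℓ}(n) − 2nuφ_{kℓ}(n) + 2nu]/((n−1)(n−2)). Then λ̃_r(n) = λ̃_r(n′) for all integers n, n′ ≥ 3 and each r ∈ {1,2,3}. -/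
/-!
Let `g_ij` and `ψ_ijk` be the stationary expectations of kernels in the strategies of two and
three sites that have mean zero in each argument under the uniform law (`ibdKernel2`,
`ibdKernel3`); they are the probabilities of identity by descent. In one step every site copies
its parent's strategy with a probability that does not depend on `n` and otherwise draws a
uniform strategy, which averages the kernels to zero. Stationarity therefore gives recursions
`g = T g`, `ψ = T ψ` on pairs and triples of distinct sites whose coefficients do not involve `n`.
The fixation axiom makes them strict contractions, so by a maximum principle `g` and `ψ` are the
same for every `n`, and each `λ̃_r(n)` is an `n`-free linear expression in `g` and `ψ`.
-/

open Finset

namespace SCT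

/-- The probability that `i` replaces `j`, for fecundity vector `F`, under the
replacement-rule family `p`. -/
noncomputable def eRep {N : ℕ} (p : (Fin N → ℝ) → Event N → ℝ) (F : Fin N → ℝ)
    (i j : Fin N) : ℝ :=
  ∑ E ∈ univ.filter (fun E : Event N => j ∈ E.1 ∧ E.2 j = i), p F E

/-- `mCoef p k i j` is the marginal effect `m_k^{ij}` of `k`'s fecundity on the
probability that `i` replaces `j`, evaluated at the all-ones fecundity vector. -/
noncomputable def mCoef {N : ℕ} (p : (Fin N → ℝ) → Event N → ℝ) (k i j : Fin N) : ℝ :=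
  fderiv ℝ (fun F => eRep p F i j) (fun _ => (1:ℝ)) (Pi.single k 1)

/-- Neutral replacement probability `e°_{ij}`. -/
noncomputable def e0 {N : ℕ} (p : (Fin N → ℝ) → Event N → ℝ) (i j : Fin N) : ℝ :=
  eRep p (fun _ => (1:ℝ)) i j

/-- Neutral death probability `d°_i`. -/
noncomputable def d0 {N : ℕ} (p : (Fin N → ℝ) → Event N → ℝ) (i : Fin N) : ℝ :=
  ∑ j, e0 p j i

/-- Ancestral random-walk matrix `A_{ij} := e°_{ji} / d°_i`. -/
noncomputable def Amat {N : ℕ} (p : (Fin N → ℝ) → Event N → ℝ) :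
    Matrix (Fin N) (Fin N) ℝ :=
  Matrix.of fun i j => e0 p j i / d0 p i

/-- Mutation-weighted quantity `μ_i := (1/N)·Σ_j u·(Ã⁻¹)_{ji}` with
`Ã := I − (1−u)A`. -/
noncomputable def muVec {N : ℕ} (p : (Fin N → ℝ) → Event N → ℝ) (u : ℝ) (i : Fin N) : ℝ :=
  (1/(N:ℝ)) * ∑ j, u * ((1 - (1-u) • Amat p)⁻¹ j i)

/-- Mutation-weighted reproductive value `v*_i := μ_i / (u·d°_i)`. -/
noncomputable def vstar {N : ℕ} (p : (Fin N → ℝ) → Event N → ℝ) (u : ℝ) (i : Fin N) : ℝ :=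
  muVec p u i / (u * d0 p i)

/-- Total payoff of site `i` in state `x` for a symmetric matrix game `a` with
interaction structure `ω`. -/
noncomputable def payoffSym {N n : ℕ} (ω : Fin N → Fin N → ℝ) (a : Fin n → Fin n → ℝ)
    (i : Fin N) (x : Fin N → Fin n) : ℝ :=
  ∑ l, ω i l * a (x i) (x l)

/-- Transition probabilities of the mutation–selection chain at selection
intensity `δ` for the symmetric game `(ω, a)`, with fecundities
`F_i(x) = exp(δ·u_i(x))`. -/
noncomputable def PdelSym (N n : ℕ) (p : (Fin N → ℝ) → Event N → ℝ) (u : ℝ)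
    (ω : Fin N → Fin N → ℝ) (a : Fin n → Fin n → ℝ) (δ : ℝ)
    (x y : Fin N → Fin n) : ℝ :=
  transMat N n (p (fun i => Real.exp (δ * payoffSym ω a i x))) u x y

/-- Structure coefficient `λ̃₁`. -/
noncomputable def lamT1 {N : ℕ} (n : ℕ) (p : (Fin N → ℝ) → Event N → ℝ) (u : ℝ)
    (ω : Fin N → Fin N → ℝ) (φ2 : Fin N → Fin N → ℝ)
    (φ3 : Fin N → Fin N → Fin N → ℝ) : ℝ :=
  ∑ i, ∑ j, ∑ k, vstar p u i * mCoef p k j i * ∑ l, ω k l *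
    ((-(n:ℝ)^2 * φ3 i k l + (n:ℝ)^2 * (1-u) * φ3 j k l
      + (n:ℝ) * φ2 i k + (n:ℝ) * φ2 i l
      - (n:ℝ) * (1-u) * φ2 j k - (n:ℝ) * (1-u) * φ2 j l
      + (n:ℝ) * u * φ2 k l - 2*u) / (((n:ℝ) - 1) * ((n:ℝ) - 2)))

/-- Structure coefficient `λ̃₂`. -/
noncomputable def lamT2 {N : ℕ} (n : ℕ) (p : (Fin N → ℝ) → Event N → ℝ) (u : ℝ)
    (ω : Fin N → Fin N → ℝ) (φ2 : Fin N → Fin N → ℝ)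
    (φ3 : Fin N → Fin N → Fin N → ℝ) : ℝ :=
  ∑ i, ∑ j, ∑ k, vstar p u i * mCoef p k j i * ∑ l, ω k l *
    ((-(n:ℝ)^2 * φ3 i k l + (n:ℝ)^2 * (1-u) * φ3 j k l
      + (n:ℝ) * φ2 i k + (n:ℝ) * ((n:ℝ) - 1) * φ2 i l
      - (n:ℝ) * (1-u) * φ2 j k - (n:ℝ) * ((n:ℝ) - 1) * (1-u) * φ2 j l
      + (n:ℝ) * u * φ2 k l - (n:ℝ) * u) / (((n:ℝ) - 1) * ((n:ℝ) - 2)))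

/-- Structure coefficient `λ̃₃`. -/
noncomputable def lamT3 {N : ℕ} (n : ℕ) (p : (Fin N → ℝ) → Event N → ℝ) (u : ℝ)
    (ω : Fin N → Fin N → ℝ) (φ2 : Fin N → Fin N → ℝ)
    (φ3 : Fin N → Fin N → Fin N → ℝ) : ℝ :=
  ∑ i, ∑ j, ∑ k, vstar p u i * mCoef p k j i * ∑ l, ω k l *
    ((2 * (n:ℝ)^2 * φ3 i k l - 2 * (n:ℝ)^2 * (1-u) * φ3 j k l
      - (n:ℝ)^2 * φ2 i k - (n:ℝ)^2 * φ2 i l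
      + (n:ℝ)^2 * (1-u) * φ2 j k + (n:ℝ)^2 * (1-u) * φ2 j l
      - 2 * (n:ℝ) * u * φ2 k l + 2 * (n:ℝ) * u) / (((n:ℝ) - 1) * ((n:ℝ) - 2)))

section Marginals

variable {α β : Type*} [Fintype α] [DecidableEq α] [Fintype β]

theorem sum_prod_mul_prod_eq_prod_sum (K g : α → β → ℝ) (hK : ∀ s, ∑ v, K s v = 1)
    (T : Finset α) :
    ∑ y : α → β, (∏ s, K s (y s)) * ∏ s ∈ T, g s (y s)
      = ∏ s ∈ T, ∑ v, K s v * g s v := by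
  have hprod : ∀ y : α → β, (∏ s, K s (y s)) * ∏ s ∈ T, g s (y s)
      = ∏ s, K s (y s) * (if s ∈ T then g s (y s) else 1) := by
    intro y
    rw [prod_mul_distrib, prod_ite_mem, univ_inter]
  simp only [hprod]
  rw [← Fintype.prod_sum (fun s v => K s v * if s ∈ T then g s v else 1)]
  simp only [mul_ite, mul_one, sum_ite_irrel, hK]
  rw [prod_ite_mem, univ_inter]

theorem sum_prod_mul_apply₂ [DecidableEq β] (K : α → β → ℝ) (hK : ∀ s, ∑ v, K s v = 1)
    {i j : α} (hij : i ≠ j) (f : β → β → ℝ) :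
    ∑ y : α → β, (∏ s, K s (y s)) * f (y i) (y j)
      = ∑ c, ∑ d, K i c * K j d * f c d := by
  have hind : ∀ c d, ∑ y : α → β, (∏ s, K s (y s)) *
      ((if y i = c then 1 else 0) * (if y j = d then 1 else 0))
        = K i c * K j d := by
    intro c d
    have h := sum_prod_mul_prod_eq_prod_sum K
      (fun s v => if s = i then (if v = c then 1 else 0) else (if v = d then 1 else 0)) hK {i, j}
    simpa [prod_pair hij, hij.symm] using h
  have hexp : ∀ y : α → β, f (y i) (y j)
      = ∑ c, ∑ d, f c d * ((if y i = c then 1 else 0) * (if y j = d then 1 else 0)) := by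
    intro y
    simp [mul_ite]
  simp_rw [hexp, mul_sum, ← hind, sum_mul]
  rw [sum_comm]
  refine sum_congr rfl fun c _ => ?_
  rw [sum_comm]
  exact sum_congr rfl fun d _ => sum_congr rfl fun y _ => by ring

theorem sum_prod_mul_apply₃ [DecidableEq β] (K : α → β → ℝ) (hK : ∀ s, ∑ v, K s v = 1)
    {i j k : α} (hij : i ≠ j) (hik : i ≠ k) (hjk : j ≠ k) (f : β → β → β → ℝ) :
    ∑ y : α → β, (∏ s, K s (y s)) * f (y i) (y j) (y k)
      = ∑ c, ∑ d, ∑ e, K i c * K j d * K k e * f c d e := by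
  have hind : ∀ c d e, ∑ y : α → β, (∏ s, K s (y s)) * ((if y i = c then 1 else 0) *
      ((if y j = d then 1 else 0) * (if y k = e then 1 else 0))) = K i c * K j d * K k e := by
    intro c d e
    have h := sum_prod_mul_prod_eq_prod_sum K
      (fun s v => if s = i then (if v = c then 1 else 0) else if s = j then
        (if v = d then 1 else 0) else (if v = e then 1 else 0)) hK {i, j, k}
    simp only [prod_insert (show i ∉ ({j, k} : Finset α) by simp [hij, hik]),
      prod_pair hjk] at h
    simpa [hij.symm, hik.symm, hjk.symm, mul_assoc] using h
  have hexp : ∀ y : α → β, f (y i) (y j) (y k) = ∑ c, ∑ d, ∑ e, f c d e *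
      ((if y i = c then 1 else 0) * ((if y j = d then 1 else 0) * (if y k = e then 1 else 0))) := by
    intro y
    simp [mul_ite]
  simp_rw [hexp, mul_sum, ← hind, sum_mul]
  rw [sum_comm]
  refine sum_congr rfl fun c _ => ?_
  rw [sum_comm]
  refine sum_congr rfl fun d _ => ?_
  rw [sum_comm]
  exact sum_congr rfl fun e _ => sum_congr rfl fun y _ => by ring

end Marginals

section Kernels

variable {n : ℕ}

/-- Law of a site's new strategy: a copy of `a` with probability `b`, otherwise uniform. -/
noncomputable def mutWeight (n : ℕ) (b : ℝ) (a c : Fin n) : ℝ :=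
  b * (if c = a then 1 else 0) + (1 - b) / n

theorem sum_mutWeight_mul (b : ℝ) (a : Fin n) (g : Fin n → ℝ) :
    ∑ c, mutWeight n b a c * g c = b * g a + (1 - b) / n * ∑ c, g c := by
  simp [mutWeight, add_mul, sum_add_distrib, mul_sum]

theorem sum_mutWeight (hn : n ≠ 0) (b : ℝ) (a : Fin n) : ∑ c, mutWeight n b a c = 1 := by
  have h := sum_mutWeight_mul b a fun _ => 1
  simp only [mul_one, sum_const, card_univ, Fintype.card_fin, nsmul_eq_mul] at h
  rw [h]
  field_simp
  ring

theorem sum_mutWeight_mul_of_sum_eq_zero (b : ℝ) (a : Fin n) {g : Fin n → ℝ}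
    (hg : ∑ c, g c = 0) : ∑ c, mutWeight n b a c * g c = b * g a := by
  rw [sum_mutWeight_mul, hg, mul_zero, add_zero]

theorem sum_sum_mutWeight_mul {f : Fin n → Fin n → ℝ} (hf₁ : ∀ d, ∑ c, f c d = 0)
    (hf₂ : ∀ c, ∑ d, f c d = 0) (b b' : ℝ) (a a' : Fin n) :
    ∑ c, ∑ d, mutWeight n b a c * mutWeight n b' a' d * f c d = b * b' * f a a' := by
  calc ∑ c, ∑ d, mutWeight n b a c * mutWeight n b' a' d * f c d
      = ∑ c, mutWeight n b a c * ∑ d, mutWeight n b' a' d * f c d := by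
        simp only [mul_sum, mul_assoc]
    _ = b' * ∑ c, mutWeight n b a c * f c a' := by
        simp only [sum_mutWeight_mul_of_sum_eq_zero _ _ (hf₂ _), mul_sum]
        exact sum_congr rfl fun c _ => by ring
    _ = b * b' * f a a' := by
        rw [sum_mutWeight_mul_of_sum_eq_zero _ _ (hf₁ _)]
        ring

theorem sum_sum_sum_mutWeight_mul {f : Fin n → Fin n → Fin n → ℝ}
    (hf₁ : ∀ d e, ∑ c, f c d e = 0) (hf₂ : ∀ c e, ∑ d, f c d e = 0)
    (hf₃ : ∀ c d, ∑ e, f c d e = 0) (b b' b'' : ℝ) (a a' a'' : Fin n) :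
    ∑ c, ∑ d, ∑ e, mutWeight n b a c * mutWeight n b' a' d * mutWeight n b'' a'' e * f c d e
      = b * b' * b'' * f a a' a'' := by
  calc ∑ c, ∑ d, ∑ e,
        mutWeight n b a c * mutWeight n b' a' d * mutWeight n b'' a'' e * f c d e
      = ∑ c, ∑ d, mutWeight n b a c * mutWeight n b' a' d *
          ∑ e, mutWeight n b'' a'' e * f c d e := by
        simp only [mul_sum, mul_assoc]
    _ = b'' * ∑ c, ∑ d, mutWeight n b a c * mutWeight n b' a' d * f c d a'' := by
        simp only [sum_mutWeight_mul_of_sum_eq_zero _ _ (hf₃ _ _), mul_sum]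
        exact sum_congr rfl fun c _ => sum_congr rfl fun d _ => by ring
    _ = b * b' * b'' * f a a' a'' := by
        rw [sum_sum_mutWeight_mul (fun d => hf₁ d a'') (fun c => hf₂ c a'')]
        ring

noncomputable def ibdKernel2 (n : ℕ) (a b : Fin n) : ℝ :=
  ((n : ℝ) * (if a = b then 1 else 0) - 1) / ((n : ℝ) - 1)

noncomputable def ibdKernel3 (n : ℕ) (a b c : Fin n) : ℝ :=
  ((n : ℝ) ^ 2 * (if a = b ∧ b = c then 1 else 0)
    - n * ((if a = b then 1 else 0) + (if a = c then 1 else 0) + (if b = c then 1 else 0)) + 2)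
  / (((n : ℝ) - 1) * ((n : ℝ) - 2))

theorem ibdKernel2_comm (a b : Fin n) : ibdKernel2 n a b = ibdKernel2 n b a := by
  simp only [ibdKernel2, eq_comm]

theorem sum_ibdKernel2_right (a : Fin n) : ∑ b, ibdKernel2 n a b = 0 := by
  simp [ibdKernel2, ← sum_div, sum_sub_distrib]

theorem sum_ibdKernel2_left (b : Fin n) : ∑ a, ibdKernel2 n a b = 0 := by
  simpa only [ibdKernel2_comm _ b] using sum_ibdKernel2_right b

theorem ibdKernel2_self (hn : 2 ≤ n) (a : Fin n) : ibdKernel2 n a a = 1 := by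
  have : (n : ℝ) - 1 ≠ 0 := by
    have : (2 : ℝ) ≤ n := by exact_mod_cast hn
    linarith
  simp [ibdKernel2, this]

theorem ibdKernel3_comm₁₂ (a b c : Fin n) : ibdKernel3 n a b c = ibdKernel3 n b a c := by
  unfold ibdKernel3
  by_cases hab : a = b <;> by_cases hac : a = c <;> by_cases hbc : b = c <;> simp_all [eq_comm]

theorem ibdKernel3_comm₂₃ (a b c : Fin n) : ibdKernel3 n a b c = ibdKernel3 n a c b := by
  unfold ibdKernel3
  by_cases hab : a = b <;> by_cases hac : a = c <;> by_cases hbc : b = c <;> simp_all [eq_comm]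

theorem sum_ibdKernel3_right (a b : Fin n) : ∑ c, ibdKernel3 n a b c = 0 := by
  simp only [ibdKernel3]
  rw [← sum_div, div_eq_zero_iff]
  left
  by_cases hab : a = b
  · subst hab
    simp only [true_and, mul_ite, mul_one, mul_zero, ↓reduceIte, mul_add, sum_add_distrib,
      sum_sub_distrib, sum_ite_eq, mem_univ, sum_const, card_univ, Fintype.card_fin,
      nsmul_eq_mul]
    ring
  · simp only [hab, false_and, ↓reduceIte, mul_zero, zero_add, mul_add, mul_ite, mul_one,
      zero_sub, neg_add_rev, sum_add_distrib, sum_neg_distrib, sum_ite_eq, mem_univ, sum_const,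
      card_univ, Fintype.card_fin, nsmul_eq_mul]
    ring

theorem ibdKernel3_self_left (hn : 3 ≤ n) (a c : Fin n) :
    ibdKernel3 n a a c = ibdKernel2 n a c := by
  have h : (3 : ℝ) ≤ n := by exact_mod_cast hn
  have h1 : (n : ℝ) - 1 ≠ 0 := by linarith
  have h2 : (n : ℝ) - 2 ≠ 0 := by linarith
  unfold ibdKernel3 ibdKernel2
  by_cases hac : a = c
  · simp only [hac, and_self, if_true]
    field_simp
    ring
  · simp only [hac, and_false, if_false, if_true]
    field_simp
    ring

end Kernels

section OneStep

variable {N n : ℕ}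

/-- Probability that, under the event `E`, site `s` ends up with an unmutated copy of the
strategy of its parent `extMap E s` (a site that is not replaced is its own parent). -/
noncomputable def inheritProb (u : ℝ) (E : Event N) (s : Fin N) : ℝ :=
  if s ∈ E.1 then 1 - u else 1

theorem inheritProb_nonneg {u : ℝ} (hu1 : u ≤ 1) (E : Event N) (s : Fin N) :
    0 ≤ inheritProb u E s := by
  unfold inheritProb; split <;> linarith

theorem inheritProb_le_one {u : ℝ} (hu0 : 0 ≤ u) (E : Event N) (s : Fin N) :
    inheritProb u E s ≤ 1 := by
  unfold inheritProb; split <;> linarith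

theorem inheritProb_mul_lt_one {u : ℝ} (hu0 : 0 < u) (hu1 : u ≤ 1) {E : Event N}
    {i j : Fin N} (hmem : i ∈ E.1 ∨ j ∈ E.1) : inheritProb u E i * inheritProb u E j < 1 := by
  have hi := inheritProb_le_one hu0.le E i
  have hj := inheritProb_le_one hu0.le E j
  have hi0 := inheritProb_nonneg hu1 E i
  have hj0 := inheritProb_nonneg hu1 E j
  rcases hmem with h | h
  · have : inheritProb u E i = 1 - u := if_pos h
    nlinarith
  · have : inheritProb u E j = 1 - u := if_pos h
    nlinarith

theorem transMat_eq_sum_prod_mutWeight (q : Event N → ℝ) (u : ℝ) (x y : Fin N → Fin n) :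
    transMat N n q u x y
      = ∑ E, q E * ∏ s, mutWeight n (inheritProb u E s) (x (extMap E s)) (y s) := by
  refine sum_congr rfl fun E _ => ?_
  rw [mul_assoc, ← prod_mul_prod_compl E.1]
  congr 2 <;> refine prod_congr rfl fun s hs => ?_
  · simp [mutWeight, inheritProb, extMap, hs]
  · have hs' : s ∉ E.1 := by simpa using hs
    simp [mutWeight, inheritProb, extMap, hs', eq_comm]

theorem sum_transMat_mul (q : Event N → ℝ) (u : ℝ) (x : Fin N → Fin n)
    (F : (Fin N → Fin n) → ℝ) :
    ∑ y, transMat N n q u x y * F y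
      = ∑ E, q E *
          ∑ y, (∏ s, mutWeight n (inheritProb u E s) (x (extMap E s)) (y s)) * F y := by
  simp only [transMat_eq_sum_prod_mutWeight, sum_mul, mul_sum, mul_assoc]
  exact sum_comm

theorem sum_transMat_mul_ibdKernel2 (hn : n ≠ 0) (q : Event N → ℝ) (u : ℝ)
    (x : Fin N → Fin n) {i j : Fin N} (hij : i ≠ j) :
    ∑ y, transMat N n q u x y * ibdKernel2 n (y i) (y j)
      = ∑ E, q E * (inheritProb u E i * inheritProb u E j *
          ibdKernel2 n (x (extMap E i)) (x (extMap E j))) := by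
  rw [sum_transMat_mul]
  refine sum_congr rfl fun E _ => ?_
  rw [sum_prod_mul_apply₂ _ (fun s => sum_mutWeight hn _ _) hij,
    sum_sum_mutWeight_mul sum_ibdKernel2_left sum_ibdKernel2_right]

theorem sum_transMat_mul_ibdKernel3 (hn : n ≠ 0) (q : Event N → ℝ) (u : ℝ)
    (x : Fin N → Fin n) {i j k : Fin N} (hij : i ≠ j) (hik : i ≠ k) (hjk : j ≠ k) :
    ∑ y, transMat N n q u x y * ibdKernel3 n (y i) (y j) (y k)
      = ∑ E, q E * (inheritProb u E i * inheritProb u E j * inheritProb u E k *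
          ibdKernel3 n (x (extMap E i)) (x (extMap E j)) (x (extMap E k))) := by
  have hsum₃ := sum_ibdKernel3_right (n := n)
  have hsum₂ : ∀ a c : Fin n, ∑ b, ibdKernel3 n a b c = 0 := fun a c => by
    simpa only [ibdKernel3_comm₂₃ a c] using hsum₃ a c
  have hsum₁ : ∀ b c : Fin n, ∑ a, ibdKernel3 n a b c = 0 := fun b c => by
    simpa only [ibdKernel3_comm₁₂ _ b] using hsum₂ b c
  rw [sum_transMat_mul]
  refine sum_congr rfl fun E _ => ?_
  rw [sum_prod_mul_apply₃ _ (fun s => sum_mutWeight hn _ _) hij hik hjk,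
    sum_sum_sum_mutWeight_mul hsum₁ hsum₂ hsum₃]

end OneStep

theorem IsStationary.sum_mul_eq {N n : ℕ} {P : (Fin N → Fin n) → (Fin N → Fin n) → ℝ}
    {π : (Fin N → Fin n) → ℝ} (hπ : IsStationary P π) (F : (Fin N → Fin n) → ℝ) :
    ∑ y, π y * F y = ∑ x, π x * ∑ y, P x y * F y := by
  calc ∑ y, π y * F y = ∑ y, (∑ x, π x * P x y) * F y := by simp only [hπ.2]
    _ = ∑ x, π x * ∑ y, P x y * F y := by
        simp only [sum_mul, mul_sum, mul_assoc]
        exact sum_comm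

section IdentityByDescent

variable {N n : ℕ}

noncomputable def ibd2 (n : ℕ) (π : (Fin N → Fin n) → ℝ) (i j : Fin N) : ℝ :=
  ∑ x, π x * ibdKernel2 n (x i) (x j)

noncomputable def ibd3 (n : ℕ) (π : (Fin N → Fin n) → ℝ) (i j k : Fin N) : ℝ :=
  ∑ x, π x * ibdKernel3 n (x i) (x j) (x k)

theorem ibd2_eq_phi2 {π : (Fin N → Fin n) → ℝ} (hπ : ∑ x, π x = 1) (i j : Fin N) :
    ibd2 n π i j = (n * phi2 π i j - 1) / ((n : ℝ) - 1) := by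
  simp only [ibd2, ibdKernel2, phi2, mul_div_assoc', ← sum_div, mul_sub, sum_sub_distrib, hπ,
    mul_one, mul_sum]
  congr 2
  exact sum_congr rfl fun x _ => by ring

theorem ibd3_eq_phi {π : (Fin N → Fin n) → ℝ} (hπ : ∑ x, π x = 1) (i j k : Fin N) :
    ibd3 n π i j k = ((n : ℝ) ^ 2 * phi3 π i j k
      - n * (phi2 π i j + phi2 π i k + phi2 π j k) + 2)
      / (((n : ℝ) - 1) * ((n : ℝ) - 2)) := by
  simp only [ibd3, ibdKernel3, phi2, phi3, mul_div_assoc', ← sum_div, mul_add, mul_sub,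
    sum_add_distrib, sum_sub_distrib, mul_left_comm _ ((n : ℝ) ^ 2), mul_left_comm _ (n : ℝ),
    ← mul_sum, ← sum_mul, hπ, one_mul]

theorem ibd2_self (hn : 2 ≤ n) {π : (Fin N → Fin n) → ℝ} (hπ : ∑ x, π x = 1)
    (i : Fin N) :
    ibd2 n π i i = 1 := by
  simp [ibd2, ibdKernel2_self hn, hπ]

theorem ibd3_self_left (hn : 3 ≤ n) (π : (Fin N → Fin n) → ℝ) (i k : Fin N) :
    ibd3 n π i i k = ibd2 n π i k := by
  simp only [ibd3, ibd2, ibdKernel3_self_left hn]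

theorem ibd3_comm₁₂ (π : (Fin N → Fin n) → ℝ) (i j k : Fin N) :
    ibd3 n π i j k = ibd3 n π j i k := by
  exact sum_congr rfl fun x _ => by rw [ibdKernel3_comm₁₂]

theorem ibd3_comm₂₃ (π : (Fin N → Fin n) → ℝ) (i j k : Fin N) :
    ibd3 n π i j k = ibd3 n π i k j := by
  exact sum_congr rfl fun x _ => by rw [ibdKernel3_comm₂₃]

theorem ibd3_self_mid (hn : 3 ≤ n) (π : (Fin N → Fin n) → ℝ) (i j : Fin N) :
    ibd3 n π i j i = ibd2 n π i j := by
  rw [ibd3_comm₂₃, ibd3_self_left hn]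

theorem ibd3_self_right (hn : 3 ≤ n) (π : (Fin N → Fin n) → ℝ) (i j : Fin N) :
    ibd3 n π i j j = ibd2 n π j i := by
  rw [ibd3_comm₁₂, ibd3_self_mid hn]

theorem ibd2_eq_sum (hn : n ≠ 0) {q : Event N → ℝ} {u : ℝ} {π : (Fin N → Fin n) → ℝ}
    (hπ : IsStationary (transMat N n q u) π) {i j : Fin N} (hij : i ≠ j) :
    ibd2 n π i j = ∑ E, q E * (inheritProb u E i * inheritProb u E j *
      ibd2 n π (extMap E i) (extMap E j)) := by
  rw [ibd2, hπ.sum_mul_eq]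
  simp only [sum_transMat_mul_ibdKernel2 hn q u _ hij, ibd2, mul_sum]
  rw [sum_comm]
  exact sum_congr rfl fun E _ => sum_congr rfl fun x _ => by ring

theorem ibd3_eq_sum (hn : n ≠ 0) {q : Event N → ℝ} {u : ℝ} {π : (Fin N → Fin n) → ℝ}
    (hπ : IsStationary (transMat N n q u) π) {i j k : Fin N}
    (hij : i ≠ j) (hik : i ≠ k) (hjk : j ≠ k) :
    ibd3 n π i j k = ∑ E, q E * (inheritProb u E i * inheritProb u E j * inheritProb u E k *
      ibd3 n π (extMap E i) (extMap E j) (extMap E k)) := by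
  rw [ibd3, hπ.sum_mul_eq]
  simp only [sum_transMat_mul_ibdKernel3 hn q u _ hij hik hjk, ibd3, mul_sum]
  rw [sum_comm]
  exact sum_congr rfl fun E _ => sum_congr rfl fun x _ => by ring

end IdentityByDescent

/-- Maximum principle: compare `f` and `f'` at a point where `|f - f'|` is largest. -/
theorem eq_of_eq_sum_of_sum_lt_one {ι κ : Type*} [Fintype ι] [Fintype κ] {f f' : ι → ℝ}
    (good : ι → Prop) (a : ι → κ → ℝ) (t : ι → κ → ι)
    (ha₀ : ∀ s k, 0 ≤ a s k)
    (ha₁ : ∀ s, good s → ∑ k, a s k < 1) (hbad : ∀ s, ¬ good s → f s = f' s)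
    (hf : ∀ s, good s → f s = ∑ k, a s k * f (t s k))
    (hf' : ∀ s, good s → f' s = ∑ k, a s k * f' (t s k)) : f = f' := by
  funext s
  obtain ⟨s₀, -, hmax⟩ := exists_max_image univ (fun s => |f s - f' s|) ⟨s, mem_univ s⟩
  suffices h₀ : |f s₀ - f' s₀| = 0 by
    have := hmax s (mem_univ s)
    rw [h₀] at this
    exact sub_eq_zero.mp (abs_nonpos_iff.mp this)
  by_cases hg : good s₀
  · have hle : |f s₀ - f' s₀| ≤ (∑ k, a s₀ k) * |f s₀ - f' s₀| := by
      calc |f s₀ - f' s₀| = |∑ k, a s₀ k * (f (t s₀ k) - f' (t s₀ k))| := by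
            rw [hf s₀ hg, hf' s₀ hg, ← sum_sub_distrib]
            simp only [mul_sub]
        _ ≤ ∑ k, a s₀ k * |f (t s₀ k) - f' (t s₀ k)| := by
            refine (abs_sum_le_sum_abs _ _).trans_eq (sum_congr rfl fun k _ => ?_)
            rw [abs_mul, abs_of_nonneg (ha₀ s₀ k)]
        _ ≤ (∑ k, a s₀ k) * |f s₀ - f' s₀| := by
            rw [sum_mul]
            exact sum_le_sum fun k _ =>
              mul_le_mul_of_nonneg_left (hmax _ (mem_univ _)) (ha₀ s₀ k)
    nlinarith [ha₁ s₀ hg, abs_nonneg (f s₀ - f' s₀)]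
  · rw [hbad s₀ hg, sub_self, abs_zero]

theorem foldr_comp_apply_eq_self {α : Type*} (l : List (α → α)) {x : α}
    (h : ∀ g ∈ l, g x = x) : l.foldr (· ∘ ·) id x = x := by
  induction l with
  | nil => rfl
  | cons g l ih =>
      simp only [List.foldr_cons, Function.comp_apply]
      rw [ih fun g' hg' => h g' (List.mem_cons_of_mem g hg'), h g List.mem_cons_self]

/-- The fixation sequence sends every site to the same one, so it cannot fix two sites. -/
theorem FixationAxiom.exists_mem_or_mem {N : ℕ} {q : Event N → ℝ} (hfix : FixationAxiom q)
    {i j : Fin N} (hij : i ≠ j) : ∃ E, 0 < q E ∧ (i ∈ E.1 ∨ j ∈ E.1) := by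
  by_contra! hc
  obtain ⟨i₀, m, E, -, hpos, -, hall⟩ := hfix
  have hfixed : ∀ s, s = i ∨ s = j →
      (List.ofFn fun k => extMap (E k)).foldr (· ∘ ·) id s = s := by
    intro s hs
    refine foldr_comp_apply_eq_self _ fun g hg => ?_
    obtain ⟨k, rfl⟩ := List.mem_ofFn.mp hg
    have hk := hc (E k) (hpos k)
    rcases hs with rfl | rfl
    · exact if_neg hk.1
    · exact if_neg hk.2
  exact hij ((hfixed i (Or.inl rfl)).symm.trans ((hall i).trans
    ((hall j).symm.trans (hfixed j (Or.inr rfl)))))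

section Uniqueness

variable {N : ℕ} {q : Event N → ℝ} {u : ℝ}

theorem sum_mul_inheritProb_mul_lt_one (hq : IsDist q) (hfix : FixationAxiom q)
    (hu0 : 0 < u) (hu1 : u ≤ 1) {i j : Fin N} (hij : i ≠ j) :
    ∑ E, q E * (inheritProb u E i * inheritProb u E j) < 1 := by
  obtain ⟨E₀, hE₀, hmem⟩ := hfix.exists_mem_or_mem hij
  rw [← hq.2]
  refine sum_lt_sum (fun E _ => mul_le_of_le_one_right (hq.1 E) ?_)
    ⟨E₀, mem_univ _, mul_lt_of_lt_one_right hE₀ (inheritProb_mul_lt_one hu0 hu1 hmem)⟩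
  exact mul_le_one₀ (inheritProb_le_one hu0.le E i) (inheritProb_nonneg hu1 E j)
    (inheritProb_le_one hu0.le E j)

theorem ibd2_eq_of_isStationary (hq : IsDist q) (hfix : FixationAxiom q) (hu0 : 0 < u)
    (hu1 : u ≤ 1) {n n' : ℕ} (hn : 2 ≤ n) (hn' : 2 ≤ n')
    {π : (Fin N → Fin n) → ℝ} {π' : (Fin N → Fin n') → ℝ}
    (hπ : IsStationary (transMat N n q u) π) (hπ' : IsStationary (transMat N n' q u) π') :
    ibd2 n π = ibd2 n' π' := by
  have h := eq_of_eq_sum_of_sum_lt_one (f := fun s : Fin N × Fin N => ibd2 n π s.1 s.2)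
    (f' := fun s => ibd2 n' π' s.1 s.2) (fun s => s.1 ≠ s.2)
    (fun s E => q E * (inheritProb u E s.1 * inheritProb u E s.2))
    (fun s E => (extMap E s.1, extMap E s.2))
    (fun s E => mul_nonneg (hq.1 E)
      (mul_nonneg (inheritProb_nonneg hu1 E _) (inheritProb_nonneg hu1 E _)))
    (fun s hs => sum_mul_inheritProb_mul_lt_one hq hfix hu0 hu1 hs)
    (fun s hs => by
      obtain ⟨i, j⟩ := s
      obtain rfl : i = j := not_not.mp hs
      simp only [ibd2_self hn hπ.1.2, ibd2_self hn' hπ'.1.2])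
    (fun s hs => by simp only [ibd2_eq_sum (by omega) hπ hs, mul_assoc])
    (fun s hs => by simp only [ibd2_eq_sum (by omega) hπ' hs, mul_assoc])
  funext i j
  exact congrFun h (i, j)

theorem ibd3_eq_of_isStationary (hq : IsDist q) (hfix : FixationAxiom q) (hu0 : 0 < u)
    (hu1 : u ≤ 1) {n n' : ℕ} (hn : 3 ≤ n) (hn' : 3 ≤ n')
    {π : (Fin N → Fin n) → ℝ} {π' : (Fin N → Fin n') → ℝ}
    (hπ : IsStationary (transMat N n q u) π) (hπ' : IsStationary (transMat N n' q u) π')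
    (h₂ : ibd2 n π = ibd2 n' π') :
    ibd3 n π = ibd3 n' π' := by
  have h := eq_of_eq_sum_of_sum_lt_one
    (f := fun s : Fin N × Fin N × Fin N => ibd3 n π s.1 s.2.1 s.2.2)
    (f' := fun s => ibd3 n' π' s.1 s.2.1 s.2.2)
    (fun s => s.1 ≠ s.2.1 ∧ s.1 ≠ s.2.2 ∧ s.2.1 ≠ s.2.2)
    (fun s E => q E * (inheritProb u E s.1 * inheritProb u E s.2.1 * inheritProb u E s.2.2))
    (fun s E => (extMap E s.1, extMap E s.2.1, extMap E s.2.2))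
    (fun s E => mul_nonneg (hq.1 E) (mul_nonneg
      (mul_nonneg (inheritProb_nonneg hu1 E _) (inheritProb_nonneg hu1 E _))
      (inheritProb_nonneg hu1 E _)))
    (fun s hs => (sum_le_sum fun E _ => mul_le_mul_of_nonneg_left
      (mul_le_of_le_one_right
        (mul_nonneg (inheritProb_nonneg hu1 E _) (inheritProb_nonneg hu1 E _))
        (inheritProb_le_one hu0.le E _)) (hq.1 E)).trans_lt
      (sum_mul_inheritProb_mul_lt_one hq hfix hu0 hu1 hs.1))
    (fun s hs => by
      obtain ⟨i, j, k⟩ := s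
      simp only [not_and_or, not_not] at hs
      rcases hs with rfl | rfl | rfl
      · simp only [ibd3_self_left hn, ibd3_self_left hn', h₂]
      · simp only [ibd3_self_mid hn, ibd3_self_mid hn', h₂]
      · simp only [ibd3_self_right hn, ibd3_self_right hn', h₂])
    (fun s hs => by simp only [ibd3_eq_sum (by omega) hπ hs.1 hs.2.1 hs.2.2, mul_assoc])
    (fun s hs => by simp only [ibd3_eq_sum (by omega) hπ' hs.1 hs.2.1 hs.2.2, mul_assoc])
  funext i j k
  exact congrFun h (i, j, k)

end Uniqueness

section StructureCoefficients

variable {N n : ℕ} (p : (Fin N → ℝ) → Event N → ℝ) (u : ℝ)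
  (ω : Fin N → Fin N → ℝ)
  {π : (Fin N → Fin n) → ℝ}

theorem lamT1_eq (hn : 3 ≤ n) (hπ : ∑ x, π x = 1) :
    lamT1 n p u ω (phi2 π) (phi3 π) = ∑ i, ∑ j, ∑ k, vstar p u i * mCoef p k j i *
      ∑ l, ω k l * ((1 - u) * ibd3 n π j k l - ibd3 n π i k l) := by
  have h : (3 : ℝ) ≤ n := by exact_mod_cast hn
  have h1 : (n : ℝ) - 1 ≠ 0 := by linarith
  have h2 : (n : ℝ) - 2 ≠ 0 := by linarith
  simp only [lamT1, ibd3_eq_phi hπ]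
  congr! 6 with i j k l
  field_simp
  ring

theorem lamT2_eq (hn : 3 ≤ n) (hπ : ∑ x, π x = 1) :
    lamT2 n p u ω (phi2 π) (phi3 π) = ∑ i, ∑ j, ∑ k, vstar p u i * mCoef p k j i *
      ∑ l, ω k l * (ibd2 n π i l - (1 - u) * ibd2 n π j l
        + (1 - u) * ibd3 n π j k l - ibd3 n π i k l) := by
  have h : (3 : ℝ) ≤ n := by exact_mod_cast hn
  have h1 : (n : ℝ) - 1 ≠ 0 := by linarith
  have h2 : (n : ℝ) - 2 ≠ 0 := by linarith
  simp only [lamT2, ibd2_eq_phi2 hπ, ibd3_eq_phi hπ]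
  congr! 6 with i j k l
  field_simp
  ring

theorem lamT3_eq (hn : 3 ≤ n) (hπ : ∑ x, π x = 1) :
    lamT3 n p u ω (phi2 π) (phi3 π) = ∑ i, ∑ j, ∑ k, vstar p u i * mCoef p k j i *
      ∑ l, ω k l * ((1 - u) * (ibd2 n π j k + ibd2 n π j l) - ibd2 n π i k - ibd2 n π i l
        + 2 * (ibd3 n π i k l - (1 - u) * ibd3 n π j k l)) := by
  have h : (3 : ℝ) ≤ n := by exact_mod_cast hn
  have h1 : (n : ℝ) - 1 ≠ 0 := by linarith
  have h2 : (n : ℝ) - 2 ≠ 0 := by linarith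
  simp only [lamT3, ibd2_eq_phi2 hπ, ibd3_eq_phi hπ]
  congr! 6 with i j k l
  field_simp
  ring

end StructureCoefficients

theorem stmt7_general (N : ℕ)
    (p : (Fin N → ℝ) → Event N → ℝ)
    (hpdist : ∀ F : Fin N → ℝ, (∀ i, 0 < F i) → IsDist (p F))
    (hfix : FixationAxiom (p (fun _ => (1:ℝ))))
    (u : ℝ) (hu0 : 0 < u) (hu1 : u ≤ 1)
    (ω : Fin N → Fin N → ℝ)
    (πn : (n : ℕ) → (Fin N → Fin n) → ℝ)
    (hpis : ∀ n : ℕ, 3 ≤ n →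
      IsStationary (transMat N n (p (fun _ => (1:ℝ))) u) (πn n) ∧
      ∀ π', IsStationary (transMat N n (p (fun _ => (1:ℝ))) u) π' → π' = πn n) :
    ∀ n n' : ℕ, 3 ≤ n → 3 ≤ n' →
      lamT1 n p u ω (phi2 (πn n)) (phi3 (πn n)) =
        lamT1 n' p u ω (phi2 (πn n')) (phi3 (πn n')) ∧
      lamT2 n p u ω (phi2 (πn n)) (phi3 (πn n)) =
        lamT2 n' p u ω (phi2 (πn n')) (phi3 (πn n')) ∧
      lamT3 n p u ω (phi2 (πn n)) (phi3 (πn n)) =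
        lamT3 n' p u ω (phi2 (πn n')) (phi3 (πn n')) := by
  intro n n' hn hn'
  have hq : IsDist (p fun _ => 1) := hpdist _ fun _ => one_pos
  obtain ⟨hπ, -⟩ := hpis n hn
  obtain ⟨hπ', -⟩ := hpis n' hn'
  have h₂ := ibd2_eq_of_isStationary hq hfix hu0 hu1 (by omega) (by omega) hπ hπ'
  have h₃ := ibd3_eq_of_isStationary hq hfix hu0 hu1 hn hn' hπ hπ' h₂
  simp only [lamT1_eq p u ω hn hπ.1.2, lamT1_eq p u ω hn' hπ'.1.2,
    lamT2_eq p u ω hn hπ.1.2, lamT2_eq p u ω hn' hπ'.1.2,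
    lamT3_eq p u ω hn hπ.1.2, lamT3_eq p u ω hn' hπ'.1.2, h₂, h₃, and_self]

/-- the structure coefficients `λ̃₁`, `λ̃₂`, `λ̃₃` do not depend on
the number `n ≥ 3` of strategies. -/
theorem stmt7 (N : ℕ) (hN : 1 ≤ N)
    (p : (Fin N → ℝ) → Event N → ℝ)
    (hpdist : ∀ F : Fin N → ℝ, (∀ i, 0 < F i) → IsDist (p F))
    (hpdiff : ∀ (E : Event N) (F : Fin N → ℝ), (∀ i, 0 < F i) →
      DifferentiableAt ℝ (fun G => p G E) F)
    (hfix : FixationAxiom (p (fun _ => (1:ℝ))))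
    (u : ℝ) (hu0 : 0 < u) (hu1 : u ≤ 1)
    (hd : ∀ i, 0 < d0 p i)
    (ω : Fin N → Fin N → ℝ)
    (πn : (n : ℕ) → (Fin N → Fin n) → ℝ)
    (hpis : ∀ n : ℕ, 3 ≤ n →
      IsStationary (transMat N n (p (fun _ => (1:ℝ))) u) (πn n) ∧
      ∀ π', IsStationary (transMat N n (p (fun _ => (1:ℝ))) u) π' → π' = πn n) :
    ∀ n n' : ℕ, 3 ≤ n → 3 ≤ n' →
      lamT1 n p u ω (phi2 (πn n)) (phi3 (πn n)) =
        lamT1 n' p u ω (phi2 (πn n')) (phi3 (πn n')) ∧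
      lamT2 n p u ω (phi2 (πn n)) (phi3 (πn n)) =
        lamT2 n' p u ω (phi2 (πn n')) (phi3 (πn n')) ∧
      lamT3 n p u ω (phi2 (πn n)) (phi3 (πn n)) =
        lamT3 n' p u ω (phi2 (πn n')) (phi3 (πn n')) :=
  stmt7_general N p hpdist hfix u hu0 hu1 ω πn hpis

end SCT
end
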